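/- Let s ∈ (0,1), Δt > 0, let N be a positive integer, set T := NΔt and t_j := jΔt, and let ρ : [0,T] → ℝ. Let I[ρ] be the piecewise-linear interpolant of ρ on the uniform grid, I[ρ](t) = ((t_{j+1}−t)/Δt)·ρ(t_j) + ((t−t_j)/Δt)·ρ(t_{j+1}) for t ∈ [t_j, t_{j+1}), j = 0,…,N−1. Then ∫_0^T I[ρ](t) t^{s−1} dt = Σ_{j=0}^{N} ρ(t_j)·β_j, where β_0 = Δt^s/(s(1+s)), β_j = (Δt^s/(s(1+s)))·((j+1)^{1+s} − 2j^{1+s} + (j−1)^{1+s}) for 1 ≤ j ≤ N−1, and β_N = (Δt^s/(s(1+s)))·((N−1)^{1+s} + (1+s)·N^s − N^{1+s}). -/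

import Mathlib

/-!
On the cell `[t_j, t_{j+1}]` the interpolant is the affine function
`((j+1) ρ(t_j) - j ρ(t_{j+1})) + (ρ(t_{j+1}) - ρ(t_j)) t / Δt`, so its integral against `t^(s-1)`
is a combination of the moments `∫ t^(s-1)` and `∫ t^s`, namely `ρ(t_j) a_j + ρ(t_{j+1}) b_j`
with explicit cell weights `a_j`, `b_j`. Summing over the cells and collecting the coefficient of each
node value gives `β_0 = a_0`, `β_j = a_j + b_{j-1}` and `β_N = b_{N-1}`.
-/

open Real MeasureTheory intervalIntegral

/-- The piecewise-linear interpolant of `ρ` on the uniform grid `t_j = jΔt`: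
`I[ρ](t) = ((t_{j+1}−t)/Δt)·ρ(t_j) + ((t−t_j)/Δt)·ρ(t_{j+1})` for `t ∈ [t_j, t_{j+1})`. -/
noncomputable def plInterp (Δt : ℝ) (ρ : ℝ → ℝ) (t : ℝ) : ℝ :=
  ((((⌊t / Δt⌋₊ : ℝ) + 1) * Δt - t) / Δt) * ρ ((⌊t / Δt⌋₊ : ℝ) * Δt) +
    ((t - (⌊t / Δt⌋₊ : ℝ) * Δt) / Δt) * ρ (((⌊t / Δt⌋₊ : ℝ) + 1) * Δt)

/-- The quadrature weights of the piecewise-linear rule: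
`β_0 = Δt^s/(s(1+s))`,
`β_j = (Δt^s/(s(1+s)))((j+1)^{1+s} − 2j^{1+s} + (j−1)^{1+s})` for `1 ≤ j ≤ N−1`, and
`β_N = (Δt^s/(s(1+s)))((N−1)^{1+s} + (1+s)N^s − N^{1+s})`. -/
noncomputable def plWeight (s Δt : ℝ) (N j : ℕ) : ℝ :=
  if j = 0 then Δt ^ s / (s * (1 + s))
  else if j < N then
    Δt ^ s / (s * (1 + s)) *
      (((j:ℝ) + 1) ^ (1 + s) - 2 * (j:ℝ) ^ (1 + s) + ((j:ℝ) - 1) ^ (1 + s))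
  else
    Δt ^ s / (s * (1 + s)) *
      (((N:ℝ) - 1) ^ (1 + s) + (1 + s) * (N:ℝ) ^ s - (N:ℝ) ^ (1 + s))

theorem Finset.sum_range_mul_add_succ_mul {R : Type*} [Semiring R] (f a b : ℕ → R) (N : ℕ) :
    ∑ j ∈ Finset.range N, (f j * a j + f (j + 1) * b j)
      = ∑ j ∈ Finset.range (N + 1),
          f j * ((if j < N then a j else 0) + (if j = 0 then 0 else b (j - 1))) := by
  simp only [mul_add, Finset.sum_add_distrib, mul_ite, mul_zero]
  congr 1
  · rw [Finset.sum_range_succ, if_neg N.lt_irrefl, add_zero]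
    exact Finset.sum_congr rfl fun j hj => (if_pos (Finset.mem_range.1 hj)).symm
  · rw [Finset.sum_range_succ', if_pos rfl, add_zero]
    simp

theorem integral_affine_mul_rpow_sub_one {s a b : ℝ} (hs : 0 < s) (ha : 0 ≤ a) (hb : 0 ≤ b)
    (c d : ℝ) :
    ∫ t in a..b, (c + d * t) * t ^ (s - 1)
      = c * (b ^ s - a ^ s) / s + d * (b ^ (s + 1) - a ^ (s + 1)) / (s + 1) := by
  have hsplit : Set.EqOn (fun t => (c + d * t) * t ^ (s - 1))
      (fun t => c * t ^ (s - 1) + d * t ^ s) (Set.uIcc a b) := by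
    intro t ht
    have ht0 : 0 ≤ t := le_trans (le_min ha hb) ht.1
    have : t ^ s = t ^ (s - 1) * t := by
      simpa using rpow_add_one' ht0 (by simpa using hs.ne' : s - 1 + 1 ≠ 0)
    simp only [this]
    ring
  have hs₁ : -1 < s - 1 := by linarith
  have hs₂ : -1 < s := by linarith
  rw [integral_congr hsplit, integral_add ((intervalIntegrable_rpow' hs₁).const_mul c)
      ((intervalIntegrable_rpow' hs₂).const_mul d),
    intervalIntegral.integral_const_mul, intervalIntegral.integral_const_mul,
    integral_rpow (Or.inl hs₁), integral_rpow (Or.inl hs₂), sub_add_cancel]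
  ring

theorem intervalIntegrable_affine_mul_rpow_sub_one {s : ℝ} (hs : 0 < s) (a b c d : ℝ) :
    IntervalIntegrable (fun t => (c + d * t) * t ^ (s - 1)) volume a b :=
  (intervalIntegrable_rpow' (by linarith : -1 < s - 1)).continuousOn_mul (by fun_prop)

/- Contributions of the cell `[xΔt, (x+1)Δt]` to the weights of its left and right node:
the integrals of `t^(s-1)` against the two halves of the hat functions on that cell. -/
noncomputable def leftCellWeight (s Δt x : ℝ) : ℝ :=
  Δt ^ s / (s * (1 + s)) * ((x + 1) ^ (1 + s) - x ^ (1 + s) - (1 + s) * x ^ s)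

noncomputable def rightCellWeight (s Δt x : ℝ) : ℝ :=
  Δt ^ s / (s * (1 + s)) * (x ^ (1 + s) - (x + 1) ^ (1 + s) + (1 + s) * (x + 1) ^ s)

section Cell

variable {s Δt : ℝ} (ρ : ℝ → ℝ) (j : ℕ)

theorem plInterp_of_mem_Ico (hΔt : 0 < Δt) {t : ℝ} (ht : t ∈ Set.Ico (j * Δt) ((j + 1) * Δt)) :
    plInterp Δt ρ t
      = ((j + 1) * Δt - t) / Δt * ρ (j * Δt) + (t - j * Δt) / Δt * ρ ((j + 1) * Δt) := by
  have hfloor : ⌊t / Δt⌋₊ = j := by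
    rw [Nat.floor_eq_iff (div_nonneg (by linarith [ht.1, mul_nonneg j.cast_nonneg hΔt.le])
      hΔt.le), le_div_iff₀ hΔt, div_lt_iff₀ hΔt]
    exact ht
  rw [plInterp, hfloor]

theorem plInterp_ae_eq_affine_on_cell (hΔt : 0 < Δt) :
    ∀ᵐ t, t ∈ Set.uIoc (j * Δt) ((j + 1) * Δt) →
      plInterp Δt ρ t = ((j + 1) * ρ (j * Δt) - j * ρ ((j + 1) * Δt))
        + (ρ ((j + 1) * Δt) - ρ (j * Δt)) / Δt * t := by
  filter_upwards [volume.ae_ne ((j + 1) * Δt)] with t hne ht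
  rw [Set.uIoc_of_le (by nlinarith)] at ht
  rw [plInterp_of_mem_Ico ρ j hΔt ⟨ht.1.le, lt_of_le_of_ne ht.2 hne⟩]
  field_simp
  ring

theorem intervalIntegrable_plInterp_mul_rpow_cell (hs : 0 < s) (hΔt : 0 < Δt) :
    IntervalIntegrable (fun t => plInterp Δt ρ t * t ^ (s - 1)) volume (j * Δt) ((j + 1) * Δt) :=
  (intervalIntegrable_affine_mul_rpow_sub_one hs _ _ _ _).congr_ae <| by
    rw [Filter.EventuallyEq, ae_restrict_iff' measurableSet_uIoc]
    filter_upwards [plInterp_ae_eq_affine_on_cell ρ j hΔt] with t h ht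
    rw [h ht]

theorem integral_plInterp_mul_rpow_cell (hs : 0 < s) (hΔt : 0 < Δt) :
    ∫ t in j * Δt..(j + 1) * Δt, plInterp Δt ρ t * t ^ (s - 1)
      = ρ (j * Δt) * leftCellWeight s Δt j + ρ ((j + 1) * Δt) * rightCellWeight s Δt j := by
  have hx : (0 : ℝ) ≤ j := j.cast_nonneg
  have hx₁ : (0 : ℝ) ≤ j + 1 := by positivity
  have hs₁ : s + 1 ≠ 0 := by positivity
  have hs₁' : 1 + s ≠ 0 := by positivity
  rw [intervalIntegral.integral_congr_ae (by
      filter_upwards [plInterp_ae_eq_affine_on_cell ρ j hΔt] with t h ht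
      rw [h ht]),
    integral_affine_mul_rpow_sub_one hs (by positivity) (by positivity),
    mul_rpow hx hΔt.le, mul_rpow hx₁ hΔt.le, mul_rpow hx hΔt.le, mul_rpow hx₁ hΔt.le,
    rpow_add_one hΔt.ne', rpow_add_one' hx hs₁, rpow_add_one' hx₁ hs₁,
    leftCellWeight, rightCellWeight, rpow_one_add' hx hs₁', rpow_one_add' hx₁ hs₁']
  field_simp
  ring

end Cell

theorem plWeight_eq_cellWeights {s : ℝ} (hs : 0 < s) (Δt : ℝ) {N j : ℕ} (hN : 0 < N)
    (hj : j ≤ N) :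
    plWeight s Δt N j = (if j < N then leftCellWeight s Δt j else 0)
      + (if j = 0 then 0 else rightCellWeight s Δt ((j - 1 : ℕ) : ℝ)) := by
  rcases Nat.eq_zero_or_pos j with rfl | hj₀
  · simp [plWeight, hN, leftCellWeight, zero_rpow hs.ne', zero_rpow (by positivity : 1 + s ≠ 0)]
  rw [Nat.cast_pred hj₀]
  rcases hj.lt_or_eq with hjN | rfl
  · simp only [plWeight, hj₀.ne', hjN, if_true, if_false, leftCellWeight, rightCellWeight,
      sub_add_cancel]
    ring
  · simp only [plWeight, hj₀.ne', lt_irrefl, if_false, rightCellWeight, sub_add_cancel, zero_add]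
    ring

/-- Let `s ∈ (0,1)`, `Δt > 0`, `N ≥ 1`, `T = NΔt`, and `ρ : ℝ → ℝ`. Then
the integral of the piecewise-linear interpolant of `ρ` against `t^{s−1} dt` on `(0,T)`
equals the quadrature sum `Σ_{j=0}^N ρ(t_j) β_j`. -/
theorem stmt16 (s Δt : ℝ) (hs : s ∈ Set.Ioo (0:ℝ) 1) (hΔt : 0 < Δt) (N : ℕ) (hN : 0 < N)
    (ρ : ℝ → ℝ) :
    ∫ t in (0:ℝ)..((N:ℝ) * Δt), plInterp Δt ρ t * t ^ (s - 1)
      = ∑ j ∈ Finset.range (N + 1), ρ ((j:ℝ) * Δt) * plWeight s Δt N j := by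
  have hcells := sum_integral_adjacent_intervals (a := fun k : ℕ => (k : ℝ) * Δt) (n := N)
    (f := fun t => plInterp Δt ρ t * t ^ (s - 1)) fun k _ => by
      simpa using intervalIntegrable_plInterp_mul_rpow_cell ρ k hs.1 hΔt
  simp only [Nat.cast_zero, zero_mul, Nat.cast_add, Nat.cast_one] at hcells
  rw [← hcells]
  simp only [integral_plInterp_mul_rpow_cell ρ _ hs.1 hΔt]
  have hnodes := Finset.sum_range_mul_add_succ_mul (fun j : ℕ => ρ (j * Δt))
    (fun j : ℕ => leftCellWeight s Δt j) (fun j : ℕ => rightCellWeight s Δt j) N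
  push_cast at hnodes
  rw [hnodes]
  refine Finset.sum_congr rfl fun j hj => ?_
  rw [plWeight_eq_cellWeights hs.1 Δt hN (Finset.mem_range_succ_iff.1 hj)]
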